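/- If (G,m,w,B) satisfies CD(K,n) with K>0, n>1 and equality σ₂ = nK/(n-1) holds, then |B| = 2, every interior vertex is adjacent to both boundary vertices, the two boundary vertices 1 and 2 satisfy m₁ = m₂ and w_{1x} = w_{2x} for every interior vertex x, Deg(1) = Deg(2) = nK/(n-1), and every interior vertex x has boundary degree Deg_b(x) = (n+2)K/(n-1). -/

import Mathlib

/-!
Let `σ = nK/(n-1)`, let `u` be a Steklov eigenfunction for `σ` and let `v` be its restriction to
`B` (zero on the interior), so that `Δu = -σ v`. Integrating the `CD(K,n)` inequality for `u`
against `m` gives `σ ((1 - 1/n) σ - K) ∑ v² m = 0`, so `u` attains equality in `CD` at every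
vertex. By polarization the `CD` defect of `u` then vanishes against every test function, and
integrating this gives `ΔΔu = -σ Δu`: hence `v = -Δu / σ` is an eigenfunction of `-Δ` with
eigenvalue `σ` supported on `B`, and it attains equality in `CD` as well.

Testing the vanishing defect of `v` against point masses yields explicit identities between the
weights. Two boundary vertices with a common neighbour carry opposite values of `v`, so an
interior vertex has at most two boundary neighbours; a boundary vertex `p` with `v p ≠ 0` is
adjacent to every interior vertex at distance two; and the two boundary neighbours of an interior
vertex are adjacent to the same interior vertices. By connectivity, `B = {p, q}` with `p` and `q`
adjacent to the whole interior. The remaining equalities come from `Δv = -σ v`, from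
`∑ v m = 0`, and from a maximum principle for `w p x / m x` on the interior.
-/

open Finset

variable {V : Type*} [Fintype V] [DecidableEq V]

/-- The weighted graph Laplacian: `Δu(x) = (1/m x) ∑_y (u y - u x) w x y`. -/
noncomputable def glap (m : V → ℝ) (w : V → V → ℝ) (u : V → ℝ) (x : V) : ℝ :=
  (1 / m x) * ∑ y, (u y - u x) * w x y

/-- The carré du champ operator `Γ(u,v) = (1/2)(Δ(uv) - vΔu - uΔv)`. -/
noncomputable def gGam (m : V → ℝ) (w : V → V → ℝ) (u v : V → ℝ) (x : V) : ℝ :=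
  (1 / 2) * (glap m w (fun z => u z * v z) x - v x * glap m w u x - u x * glap m w v x)

/-- The iterated carré du champ `Γ₂(u,v) = (1/2)(ΔΓ(u,v) - Γ(Δu,v) - Γ(u,Δv))`. -/
noncomputable def gGam2 (m : V → ℝ) (w : V → V → ℝ) (u v : V → ℝ) (x : V) : ℝ :=
  (1 / 2) * (glap m w (gGam m w u v) x - gGam m w (glap m w u) v x - gGam m w u (glap m w v) x)

/-- Vertex inner product `⟨u,v⟩ = ∑_x u x v x m x`. -/
noncomputable def vip (m : V → ℝ) (u v : V → ℝ) : ℝ := ∑ x, u x * v x * m x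

/-- Edge (1-form) inner product of differentials:
`⟨du,dv⟩ = ∑_{{x,y}∈E} (u y - u x)(v y - v x) w x y = (1/2)∑_{x,y}`. -/
noncomputable def eip (w : V → V → ℝ) (u v : V → ℝ) : ℝ :=
  (1 / 2) * ∑ x, ∑ y, (u y - u x) * (v y - v x) * w x y

/-- `(m,w)` is a weighted graph structure: positive vertex measure, symmetric
nonnegative edge weights, no loops. -/
def WeightedGraph (m : V → ℝ) (w : V → V → ℝ) : Prop :=
  (∀ x, 0 < m x) ∧ (∀ x y, w x y = w y x) ∧ (∀ x y, 0 ≤ w x y) ∧ (∀ x, w x x = 0)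

/-- The underlying simple graph: `x ∼ y` iff `w x y > 0`. -/
def wgraph (w : V → V → ℝ) : SimpleGraph V := SimpleGraph.fromRel (fun x y => 0 < w x y)

/-- The Bakry-Émery curvature-dimension condition `CD(K,n)`. -/
def CD (m : V → ℝ) (w : V → V → ℝ) (K n : ℝ) : Prop :=
  ∀ (f : V → ℝ) (x : V), gGam2 m w f f x ≥ (1 / n) * (glap m w f x) ^ 2 + K * gGam m w f f x

/-- `B` is a vertex boundary: nonempty, independent, and every boundary vertex is
adjacent to some interior vertex. -/
def GraphBoundary (w : V → V → ℝ) (B : Finset V) : Prop :=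
  B.Nonempty ∧ (∀ x ∈ B, ∀ y ∈ B, w x y = 0) ∧ (∀ x ∈ B, ∃ y, y ∉ B ∧ 0 < w x y)

/-- `σ` is a Steklov eigenvalue: there is `u`, harmonic on the interior, with
boundary restriction nonzero, and `∂u/∂n = σ u` on `B`. -/
def SteklovEig (m : V → ℝ) (w : V → V → ℝ) (B : Finset V) (σ : ℝ) : Prop :=
  ∃ u : V → ℝ, (∃ x ∈ B, u x ≠ 0) ∧ (∀ x, x ∉ B → glap m w u x = 0) ∧
    (∀ x ∈ B, - glap m w u x = σ * u x)

/-- `μ` is an eigenvalue of `-Δ`. -/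
def LapEig (m : V → ℝ) (w : V → V → ℝ) (μ : ℝ) : Prop :=
  ∃ u : V → ℝ, u ≠ 0 ∧ ∀ x, - glap m w u x = μ * u x

/-- The edge weight of the induced graph on the interior `Ω = Bᶜ`. -/
def wRes (B : Finset V) (w : V → V → ℝ) : V → V → ℝ :=
  fun x y => if x ∈ B ∨ y ∈ B then 0 else w x y

lemma Finset.eq_of_forall_sum_sub_mul_eq {ι : Type*} {S : Finset ι} {f c : ι → ℝ}
    {a : ι → ι → ℝ} {r : ℝ} (ha : ∀ i j, 0 ≤ a i j) (hc : ∀ i ∈ S, 0 < c i)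
    (h : ∀ i ∈ S, ∑ j ∈ S, (f j - f i) * a i j = c i * (f i - r)) {i : ι} (hi : i ∈ S) :
    f i = r := by
  obtain ⟨imax, himax, hmax⟩ := S.exists_max_image f ⟨i, hi⟩
  obtain ⟨imin, himin, hmin⟩ := S.exists_min_image f ⟨i, hi⟩
  have hle : c imax * (f imax - r) ≤ 0 := by
    rw [← h imax himax]
    exact sum_nonpos fun j hj => mul_nonpos_of_nonpos_of_nonneg (by linarith [hmax j hj]) (ha _ _)
  have hge : 0 ≤ c imin * (f imin - r) := by
    rw [← h imin himin]
    exact sum_nonneg fun j hj => mul_nonneg (by linarith [hmin j hj]) (ha _ _)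
  have hmax_le : f imax ≤ r := by
    by_contra! hr
    exact hle.not_gt (mul_pos (hc imax himax) (by linarith))
  have hmin_ge : r ≤ f imin := by
    by_contra! hr
    exact hge.not_gt (mul_neg_of_pos_of_neg (hc imin himin) (by linarith))
  linarith [hmax i hi, hmin i hi]

lemma SimpleGraph.Connected.mem_of_adj_closed {α : Type*} {G : SimpleGraph α} (hG : G.Connected)
    {S : Set α} (hS : ∀ x y, G.Adj x y → x ∈ S → y ∈ S) {a : α} (ha : a ∈ S) (x : α) : x ∈ S := by
  induction (SimpleGraph.reachable_iff_reflTransGen a x).mp (hG.preconnected a x) with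
  | refl => exact ha
  | tail _ hyz ih => exact hS _ _ hyz ih

section Calculus

variable {α : Type*} [Fintype α] {m : α → ℝ} {w : α → α → ℝ}

lemma glap_add (f g : α → ℝ) : glap m w (f + g) = glap m w f + glap m w g := by
  ext x
  simp only [glap, Pi.add_apply, ← mul_add, ← sum_add_distrib]
  congr 1
  exact sum_congr rfl fun y _ => by ring

lemma glap_smul (c : ℝ) (f : α → ℝ) : glap m w (c • f) = c • glap m w f := by
  ext x
  simp only [glap, Pi.smul_apply, smul_eq_mul, mul_sum]
  exact sum_congr rfl fun y _ => by ring

lemma glap_const (c : ℝ) : glap m w (fun _ => c) = 0 := by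
  ext x
  simp [glap]

lemma gGam_eq_sum (u v : α → ℝ) (x : α) :
    gGam m w u v x = (2 * m x)⁻¹ * ∑ y, (u y - u x) * (v y - v x) * w x y := by
  simp only [gGam, glap, mul_sum, ← sum_sub_distrib]
  exact sum_congr rfl fun y _ => by ring

lemma gGam_comm (u v : α → ℝ) : gGam m w u v = gGam m w v u := by
  ext x
  simp only [gGam_eq_sum]
  exact congrArg _ (sum_congr rfl fun y _ => by ring)

lemma gGam_add_left (f g h : α → ℝ) : gGam m w (f + g) h = gGam m w f h + gGam m w g h := by
  ext x
  simp only [gGam_eq_sum, Pi.add_apply, ← mul_add, ← sum_add_distrib]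
  exact congrArg _ (sum_congr rfl fun y _ => by ring)

lemma gGam_smul_left (c : ℝ) (f h : α → ℝ) : gGam m w (c • f) h = c • gGam m w f h := by
  ext x
  simp only [gGam_eq_sum, Pi.smul_apply, smul_eq_mul, mul_sum]
  exact sum_congr rfl fun y _ => by ring

lemma gGam_add_right (f g h : α → ℝ) : gGam m w h (f + g) = gGam m w h f + gGam m w h g := by
  rw [gGam_comm, gGam_add_left, gGam_comm f, gGam_comm g]

lemma gGam_smul_right (c : ℝ) (f h : α → ℝ) : gGam m w h (c • f) = c • gGam m w h f := by
  rw [gGam_comm, gGam_smul_left, gGam_comm]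

lemma gGam2_comm (f g : α → ℝ) : gGam2 m w f g = gGam2 m w g f := by
  ext x
  simp only [gGam2]
  rw [gGam_comm f g, gGam_comm (glap m w g) f, gGam_comm g (glap m w f)]
  ring

lemma gGam2_add_left (f g h : α → ℝ) :
    gGam2 m w (f + g) h = gGam2 m w f h + gGam2 m w g h := by
  ext x
  simp only [gGam2, gGam_add_left, glap_add, Pi.add_apply]
  ring

lemma gGam2_smul_left (c : ℝ) (f h : α → ℝ) : gGam2 m w (c • f) h = c • gGam2 m w f h := by
  ext x
  simp only [gGam2, gGam_smul_left, glap_smul, Pi.smul_apply, smul_eq_mul]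
  ring

lemma gGam2_add_right (f g h : α → ℝ) :
    gGam2 m w h (f + g) = gGam2 m w h f + gGam2 m w h g := by
  rw [gGam2_comm, gGam2_add_left, gGam2_comm f, gGam2_comm g]

lemma gGam2_smul_right (c : ℝ) (f h : α → ℝ) : gGam2 m w h (c • f) = c • gGam2 m w h f := by
  rw [gGam2_comm, gGam2_smul_left, gGam2_comm]

lemma sum_gGam_mul (hm : ∀ x, m x ≠ 0) (u v : α → ℝ) :
    ∑ x, gGam m w u v x * m x = eip w u v := by
  simp only [eip, gGam_eq_sum, mul_sum, sum_mul]
  refine sum_congr rfl fun x _ => sum_congr rfl fun y _ => ?_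
  field_simp [hm x]

lemma eip_comm (u v : α → ℝ) : eip w u v = eip w v u := by
  simp only [eip]
  exact congrArg _ (sum_congr rfl fun x _ => sum_congr rfl fun y _ => by ring)

lemma eip_eq_neg_vip_glap (hm : ∀ x, m x ≠ 0) (hsym : ∀ x y, w x y = w y x) (u v : α → ℝ) :
    eip w u v = -vip m u (glap m w v) := by
  have hvip : vip m u (glap m w v) = ∑ x, ∑ y, u x * (v y - v x) * w x y := by
    simp only [vip, glap, mul_sum, sum_mul]
    refine sum_congr rfl fun x _ => sum_congr rfl fun y _ => ?_
    field_simp [hm x]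
  have hswap : ∑ x, ∑ y, u y * (v y - v x) * w x y = -∑ x, ∑ y, u x * (v y - v x) * w x y := by
    rw [sum_comm, ← sum_neg_distrib]
    refine sum_congr rfl fun x _ => ?_
    rw [← sum_neg_distrib]
    exact sum_congr rfl fun y _ => by rw [hsym]; ring
  have hsplit : ∑ x, ∑ y, (u y - u x) * (v y - v x) * w x y
      = ∑ x, ∑ y, u y * (v y - v x) * w x y - ∑ x, ∑ y, u x * (v y - v x) * w x y := by
    rw [← sum_sub_distrib]
    exact sum_congr rfl fun x _ => by rw [← sum_sub_distrib]; exact sum_congr rfl fun y _ => by ring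
  rw [eip, hsplit, hswap, hvip]
  ring

lemma vip_glap_comm (hm : ∀ x, m x ≠ 0) (hsym : ∀ x y, w x y = w y x) (u v : α → ℝ) :
    vip m u (glap m w v) = vip m v (glap m w u) := by
  have := eip_comm (w := w) u v
  rw [eip_eq_neg_vip_glap hm hsym, eip_eq_neg_vip_glap hm hsym] at this
  linarith

lemma sum_glap_mul_eq_zero (hm : ∀ x, m x ≠ 0) (hsym : ∀ x y, w x y = w y x) (u : α → ℝ) :
    ∑ x, glap m w u x * m x = 0 := by
  have := vip_glap_comm hm hsym (fun _ => 1) u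
  simpa [vip, glap_const] using this

lemma sum_gGam2_mul (hm : ∀ x, m x ≠ 0) (hsym : ∀ x y, w x y = w y x) (u v : α → ℝ) :
    ∑ x, gGam2 m w u v x * m x = vip m (glap m w u) (glap m w v) := by
  have hsplit : ∑ x, gGam2 m w u v x * m x = (1 / 2) * (∑ x, glap m w (gGam m w u v) x * m x
      - ∑ x, gGam m w (glap m w u) v x * m x - ∑ x, gGam m w u (glap m w v) x * m x) := by
    simp only [gGam2, mul_sum, ← sum_sub_distrib]
    exact sum_congr rfl fun x _ => by ring
  rw [hsplit, sum_glap_mul_eq_zero hm hsym, sum_gGam_mul hm, sum_gGam_mul hm,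
    eip_eq_neg_vip_glap hm hsym, eip_comm, eip_eq_neg_vip_glap hm hsym]
  have : vip m (glap m w v) (glap m w u) = vip m (glap m w u) (glap m w v) := by
    simp only [vip]; exact sum_congr rfl fun x _ => by ring
  rw [this]
  ring

end Calculus

section Weights

variable {α : Type*} [Fintype α]

noncomputable def wdeg (m : α → ℝ) (w : α → α → ℝ) (x : α) : ℝ := 1 / m x * ∑ y, w x y

noncomputable def twoStepWeight (m : α → ℝ) (w : α → α → ℝ) (x z : α) : ℝ :=
  ∑ y, w x y * w y z / m y

end Weights

section Defect

variable {α : Type*} [Fintype α] {m : α → ℝ} {w : α → α → ℝ} {K n : ℝ}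

noncomputable def cdDefect (m : α → ℝ) (w : α → α → ℝ) (K n : ℝ) (f g : α → ℝ) (x : α) : ℝ :=
  gGam2 m w f g x - 1 / n * (glap m w f x * glap m w g x) - K * gGam m w f g x

lemma CD.cdDefect_nonneg (hCD : CD m w K n) (f : α → ℝ) (x : α) :
    0 ≤ cdDefect m w K n f f x := by
  have := hCD f x
  rw [cdDefect, ← sq]
  linarith

lemma cdDefect_add_smul_self (f g : α → ℝ) (t : ℝ) (x : α) :
    cdDefect m w K n (f + t • g) (f + t • g) x
      = cdDefect m w K n f f x + 2 * t * cdDefect m w K n f g x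
        + t ^ 2 * cdDefect m w K n g g x := by
  simp only [cdDefect, gGam2_add_left, gGam2_add_right, gGam2_smul_left, gGam2_smul_right,
    gGam_add_left, gGam_add_right, gGam_smul_left, gGam_smul_right, glap_add, glap_smul,
    Pi.add_apply, Pi.smul_apply, smul_eq_mul]
  rw [gGam2_comm g f, gGam_comm g f]
  ring

lemma CD.cdDefect_eq_zero_of_self (hCD : CD m w K n) {f : α → ℝ} {x : α}
    (hf : cdDefect m w K n f f x = 0) (g : α → ℝ) : cdDefect m w K n f g x = 0 := by
  have hdisc := discrim_le_zero (a := cdDefect m w K n g g x) (b := 2 * cdDefect m w K n f g x)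
    (c := 0) fun t => by
      have := hCD.cdDefect_nonneg (f + t • g) x
      rw [cdDefect_add_smul_self, hf] at this
      linarith
  rw [discrim] at hdisc
  nlinarith [sq_nonneg (cdDefect m w K n f g x)]

lemma sum_cdDefect_mul (hm : ∀ x, m x ≠ 0) (hsym : ∀ x y, w x y = w y x) (f g : α → ℝ) :
    ∑ x, cdDefect m w K n f g x * m x
      = (1 - 1 / n) * vip m (glap m w f) (glap m w g) + K * vip m f (glap m w g) := by
  have hsplit : ∑ x, cdDefect m w K n f g x * m x = ∑ x, gGam2 m w f g x * m x
      - 1 / n * vip m (glap m w f) (glap m w g) - K * ∑ x, gGam m w f g x * m x := by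
    simp only [cdDefect, vip, mul_sum, ← sum_sub_distrib]
    exact sum_congr rfl fun x _ => by ring
  rw [hsplit, sum_gGam2_mul hm hsym, sum_gGam_mul hm, eip_eq_neg_vip_glap hm hsym]
  ring

lemma CD.cdDefect_self_eq_zero_of_sum (hCD : CD m w K n) (hm : ∀ x, 0 < m x) {f : α → ℝ}
    (hf : ∑ x, cdDefect m w K n f f x * m x = 0) (x : α) : cdDefect m w K n f f x = 0 := by
  have hterm := (sum_eq_zero_iff_of_nonneg fun y _ =>
    mul_nonneg (hCD.cdDefect_nonneg f y) (hm y).le).mp hf x (mem_univ x)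
  exact (mul_eq_zero.mp hterm).resolve_right (hm x).ne'

lemma vip_single_left [DecidableEq α] (x : α) (g : α → ℝ) :
    vip m (Pi.single x 1) g = g x * m x := by
  simp [vip, Pi.single_apply]

lemma CD.glap_glap_of_cdDefect_eq_zero (hCD : CD m w K n) (hm : ∀ x, m x ≠ 0)
    (hsym : ∀ x y, w x y = w y x) {f : α → ℝ} (hf : ∀ x, cdDefect m w K n f f x = 0) (x : α) :
    (1 - 1 / n) * glap m w (glap m w f) x + K * glap m w f x = 0 := by
  classical
  have h := sum_cdDefect_mul (K := K) (n := n) hm hsym f (Pi.single x 1)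
  rw [sum_eq_zero fun y _ => by rw [hCD.cdDefect_eq_zero_of_self (hf y), zero_mul],
    vip_glap_comm hm hsym, vip_glap_comm hm hsym f, vip_single_left, vip_single_left] at h
  have : ((1 - 1 / n) * glap m w (glap m w f) x + K * glap m w f x) * m x = 0 := by linarith
  exact (mul_eq_zero.mp this).resolve_right (hm x)

end Defect

section Single

variable {α : Type*} [Fintype α] [DecidableEq α] {m : α → ℝ} {w : α → α → ℝ}

lemma glap_single (z : α) :
    glap m w (Pi.single z 1) = (fun y => w y z / m y) - Pi.single z ((∑ t, w z t) / m z) := by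
  ext y
  by_cases hy : y = z
  · subst hy
    simp only [glap, Pi.sub_apply, Pi.single_eq_same, Pi.single_apply, sub_mul, ite_mul, one_mul,
      zero_mul, sum_sub_distrib, sum_ite_eq', mem_univ, if_true]
    ring
  · simp only [glap, Pi.sub_apply, Pi.single_apply, hy, if_false, sub_zero, ite_mul, one_mul,
      zero_mul, sum_ite_eq', mem_univ, if_true]
    ring

lemma gGam_single (v : α → ℝ) (z : α) :
    gGam m w v (Pi.single z 1)
      = (fun y => (v z - v y) * w y z / (2 * m y)) - Pi.single z (glap m w v z / 2) := by
  ext y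
  by_cases hy : y = z
  · subst hy
    simp only [gGam_eq_sum, glap, Pi.sub_apply, Pi.single_eq_same, Pi.single_apply, mul_sub,
      mul_ite, mul_one, mul_zero, sub_mul, ite_mul, zero_mul, sum_sub_distrib, sum_ite_eq',
      mem_univ, if_true, sub_self]
    ring
  · simp only [gGam_eq_sum, Pi.sub_apply, Pi.single_apply, hy, if_false, sub_zero, mul_ite,
      mul_one, mul_zero, ite_mul, zero_mul, sum_ite_eq', mem_univ, if_true]
    ring

lemma mul_glap_gGam_single {σ : ℝ} {v : α → ℝ} (hv : ∀ y, glap m w v y = -σ * v y) {x z : α}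
    (hmx : m x ≠ 0) (hxz : x ≠ z) :
    m x * glap m w (gGam m w v (Pi.single z 1)) x
      = (v z * twoStepWeight m w x z - ∑ y, v y * w x y * w y z / m y) / 2
        + σ * v z * w x z / 2 - (v z - v x) * w x z / 2 * wdeg m w x := by
  have hterm : ∀ y, (gGam m w v (Pi.single z 1) y - gGam m w v (Pi.single z 1) x) * w x y
      = (v z * (w x y * w y z / m y) - v y * w x y * w y z / m y) / 2
        + σ * v z / 2 * (Pi.single z (w x z) : α → ℝ) y
        - (v z - v x) * w x z / (2 * m x) * w x y := by
    intro y
    by_cases hy : y = z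
    · subst hy
      simp only [gGam_single, hv, Pi.sub_apply, sub_self, zero_mul, zero_div, Pi.single_eq_same,
        Pi.single_eq_of_ne hxz]
      ring
    · simp only [gGam_single, Pi.sub_apply, Pi.single_eq_of_ne hy, Pi.single_eq_of_ne hxz,
        sub_zero]
      ring
  simp only [glap, hterm, sum_add_distrib, sum_sub_distrib, ← sum_div, ← mul_sum, sum_pi_single',
    mem_univ, if_true, twoStepWeight, wdeg]
  field_simp

lemma two_mul_gGam_glap_single {σ : ℝ} {v : α → ℝ} (hv : ∀ y, glap m w v y = -σ * v y)
    {x z : α} (hmx : m x ≠ 0) (hxz : x ≠ z) :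
    2 * m x * gGam m w v (glap m w (Pi.single z 1)) x
      = ∑ y, v y * w x y * w y z / m y - v x * twoStepWeight m w x z
        - (v z - v x) * w x z * wdeg m w z + σ * v x * w x z := by
  have hterm : ∀ y, (v y - v x) * (glap m w (Pi.single z 1) y - glap m w (Pi.single z 1) x)
      * w x y = v y * w x y * w y z / m y - v x * (w x y * w y z / m y)
        - (v z - v x) * wdeg m w z * (Pi.single z (w x z) : α → ℝ) y
        - w x z / m x * ((v y - v x) * w x y) := by
    intro y
    by_cases hy : y = z
    · subst hy
      simp only [glap_single, wdeg, Pi.sub_apply, Pi.single_eq_same, Pi.single_eq_of_ne hxz,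
        sub_zero]
      ring
    · simp only [glap_single, Pi.sub_apply, Pi.single_eq_of_ne hy, Pi.single_eq_of_ne hxz,
        sub_zero]
      ring
  have hΔv : ∑ y, (v y - v x) * w x y = -σ * v x * m x := by
    rw [← hv x, glap]
    field_simp
  simp only [gGam_eq_sum, hterm, sum_sub_distrib, ← mul_sum, sum_pi_single', mem_univ, if_true,
    hΔv, twoStepWeight]
  field_simp
  ring

lemma four_mul_cdDefect_single {K n σ : ℝ} {v : α → ℝ} (hv : ∀ y, glap m w v y = -σ * v y)
    {x z : α} (hmx : m x ≠ 0) (hxz : x ≠ z) :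
    4 * m x * cdDefect m w K n v (Pi.single z 1) x
      = (v x + v z) * twoStepWeight m w x z - 2 * ∑ y, v y * w x y * w y z / m y
        + w x z * ((v z - v x) * (wdeg m w z - wdeg m w x) + 2 * σ * (v z - v x)
          + 4 * σ / n * v x - 2 * K * (v z - v x)) := by
  have hΓΔ : gGam m w (glap m w v) (Pi.single z 1) = (-σ) • gGam m w v (Pi.single z 1) := by
    rw [show glap m w v = (-σ) • v from funext fun y => by simp [hv], gGam_smul_left]
  have hΓ : gGam m w v (Pi.single z 1) x = (v z - v x) * w x z / (2 * m x) := by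
    simp [gGam_single, hxz]
  have hΔδ : glap m w (Pi.single z 1) x = w x z / m x := by
    simp [glap_single, hxz]
  rw [cdDefect, gGam2, hΓΔ, Pi.smul_apply, smul_eq_mul, hΓ, hΔδ, hv]
  field_simp
  linear_combination 8 * mul_glap_gGam_single hv hmx hxz - 4 * two_mul_gGam_glap_single hv hmx hxz

end Single

section Eigen

variable {α : Type*} [Fintype α] {m : α → ℝ} {w : α → α → ℝ} {K n σ : ℝ}

lemma sum_cdDefect_self_eq_zero (hm : ∀ x, m x ≠ 0) (hsym : ∀ x y, w x y = w y x)
    (hσK : (1 - 1 / n) * σ = K) {f g : α → ℝ} (hΔ : ∀ x, glap m w f x = -σ * g x)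
    (hfg : vip m f g = vip m g g) : ∑ x, cdDefect m w K n f f x * m x = 0 := by
  have hΔΔ : vip m (glap m w f) (glap m w f) = σ ^ 2 * vip m g g := by
    simp only [vip, hΔ, mul_sum]
    exact sum_congr rfl fun x _ => by ring
  have hfΔ : vip m f (glap m w f) = -σ * vip m g g := by
    rw [← hfg]
    simp only [vip, hΔ, mul_sum]
    exact sum_congr rfl fun x _ => by ring
  rw [sum_cdDefect_mul hm hsym, hΔΔ, hfΔ, ← hσK]
  ring

lemma CD.cdDefect_eq_zero_of_eigen (hCD : CD m w K n) (hm : ∀ x, 0 < m x)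
    (hsym : ∀ x y, w x y = w y x) (hσK : (1 - 1 / n) * σ = K) {v : α → ℝ}
    (hv : ∀ x, glap m w v x = -σ * v x) (φ : α → ℝ) (x : α) : cdDefect m w K n v φ x = 0 :=
  hCD.cdDefect_eq_zero_of_self (hCD.cdDefect_self_eq_zero_of_sum hm
    (sum_cdDefect_self_eq_zero (fun x => (hm x).ne') hsym hσK hv rfl) x) φ

lemma CD.exists_eigen_of_steklovEig [DecidableEq α] (hCD : CD m w K n) (hm : ∀ x, 0 < m x)
    (hsym : ∀ x y, w x y = w y x) (hK : K ≠ 0) (hσK : (1 - 1 / n) * σ = K) {B : Finset α}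
    (hs : SteklovEig m w B σ) :
    ∃ v : α → ℝ, (∃ p ∈ B, v p ≠ 0) ∧ (∀ x ∉ B, v x = 0) ∧ ∀ x, glap m w v x = -σ * v x := by
  obtain ⟨u, ⟨p, hpB, hup⟩, hharm, hstek⟩ := hs
  set v : α → ℝ := fun x => if x ∈ B then u x else 0
  refine ⟨v, ⟨p, hpB, by simpa [v, hpB] using hup⟩, fun x hx => if_neg hx, ?_⟩
  have hΔu : ∀ x, glap m w u x = -σ * v x := by
    intro x
    by_cases hx : x ∈ B
    · simp only [v, hx, if_true]
      linarith [hstek x hx]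
    · simp [v, hx, hharm x hx]
  have huv : vip m u v = vip m v v :=
    sum_congr rfl fun x _ => by by_cases hx : x ∈ B <;> simp [v, hx]
  have hext := hCD.cdDefect_self_eq_zero_of_sum hm
    (sum_cdDefect_self_eq_zero (fun x => (hm x).ne') hsym hσK hΔu huv)
  have hσ : σ ≠ 0 := by rintro rfl; exact hK (by simpa using hσK.symm)
  have hn : 1 - 1 / n ≠ 0 := by rintro h; rw [h, zero_mul] at hσK; exact hK hσK.symm
  have hv : v = (-σ⁻¹) • glap m w u := by
    ext y
    rw [Pi.smul_apply, smul_eq_mul, hΔu y]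
    field_simp
  intro x
  have hΔΔ : glap m w (glap m w u) x = -σ * glap m w u x := by
    have h := hCD.glap_glap_of_cdDefect_eq_zero (fun x => (hm x).ne') hsym hext x
    rw [← hσK] at h
    have h' : (1 - 1 / n) * (glap m w (glap m w u) x + σ * glap m w u x) = 0 := by
      linear_combination h
    linear_combination (mul_eq_zero.mp h').resolve_left hn
  rw [hv, glap_smul, Pi.smul_apply, smul_eq_mul, hΔΔ, Pi.smul_apply, smul_eq_mul]
  field_simp

end Eigen

section BoundaryIdentities

variable {α : Type*} {m : α → ℝ} {w : α → α → ℝ} {B : Finset α} {v : α → ℝ}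

lemma mul_weight_eq_zero_of_mem (hind : ∀ x ∈ B, ∀ y ∈ B, w x y = 0) (hvB : ∀ x ∉ B, v x = 0)
    {x : α} (hx : x ∈ B) (y : α) : v y * w x y = 0 := by
  by_cases hy : y ∈ B
  · rw [hind x hx y hy, mul_zero]
  · rw [hvB y hy, zero_mul]

variable [Fintype α]

lemma glap_eq_neg_mul_wdeg_of_mem (hind : ∀ x ∈ B, ∀ y ∈ B, w x y = 0)
    (hvB : ∀ x ∉ B, v x = 0) {x : α} (hx : x ∈ B) : glap m w v x = -(v x * wdeg m w x) := by
  have h : ∑ y, (v y - v x) * w x y = -(v x * ∑ y, w x y) := by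
    simp only [sub_mul, sum_sub_distrib, mul_weight_eq_zero_of_mem hind hvB hx, sum_const_zero,
      mul_sum]
    ring
  rw [glap, wdeg, h]
  ring

lemma sum_mul_weight_eq_zero_of_not_mem {σ : ℝ} (hv : ∀ x, glap m w v x = -σ * v x)
    (hvB : ∀ x ∉ B, v x = 0) {x : α} (hmx : m x ≠ 0) (hx : x ∉ B) : ∑ y, v y * w x y = 0 := by
  have h := hv x
  simp only [glap, hvB x hx, sub_zero, mul_zero, mul_eq_zero, one_div, inv_eq_zero, hmx,
    false_or] at h
  exact h

lemma wdeg_eq_of_mem (hind : ∀ x ∈ B, ∀ y ∈ B, w x y = 0) (hvB : ∀ x ∉ B, v x = 0) {σ : ℝ}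
    (hv : ∀ x, glap m w v x = -σ * v x) {x : α} (hx : x ∈ B) (hvx : v x ≠ 0) :
    wdeg m w x = σ := by
  have h := hv x
  rw [glap_eq_neg_mul_wdeg_of_mem hind hvB hx] at h
  have h' : v x * (wdeg m w x - σ) = 0 := by linear_combination -h
  linarith [(mul_eq_zero.mp h').resolve_left hvx]

variable [DecidableEq α] {K n σ : ℝ}

lemma add_mul_twoStepWeight_eq_zero (hind : ∀ x ∈ B, ∀ y ∈ B, w x y = 0)
    (hvB : ∀ x ∉ B, v x = 0) (hv : ∀ x, glap m w v x = -σ * v x) {x z : α} (hmx : m x ≠ 0)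
    (hx : x ∈ B) (hz : z ∈ B) (hxz : x ≠ z) (h : cdDefect m w K n v (Pi.single z 1) x = 0) :
    (v x + v z) * twoStepWeight m w x z = 0 := by
  have := four_mul_cdDefect_single (K := K) (n := n) hv hmx hxz
  simp only [h, mul_zero, hind x hx z hz, zero_mul, add_zero,
    mul_weight_eq_zero_of_mem hind hvB hx, zero_div, sum_const_zero, sub_zero] at this
  exact this.symm

lemma mul_twoStepWeight_sub_eq_zero (hind : ∀ x ∈ B, ∀ y ∈ B, w x y = 0)
    (hvB : ∀ x ∉ B, v x = 0) (hv : ∀ x, glap m w v x = -σ * v x) (hσK : (1 - 1 / n) * σ = K)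
    {x z : α} (hmx : m x ≠ 0) (hx : x ∈ B) (hz : z ∉ B)
    (h : cdDefect m w K n v (Pi.single z 1) x = 0) :
    v x * (twoStepWeight m w x z - w x z * (wdeg m w z - (1 + 2 / n) * σ)) = 0 := by
  have hxz : x ≠ z := fun h => hz (h ▸ hx)
  have hformula := four_mul_cdDefect_single (K := K) (n := n) hv hmx hxz
  have hdeg : v x * wdeg m w x = σ * v x := by
    linarith [hv x, glap_eq_neg_mul_wdeg_of_mem (m := m) hind hvB hx]
  simp only [h, mul_zero, hvB z hz, mul_weight_eq_zero_of_mem hind hvB hx, zero_mul, zero_div,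
    sum_const_zero] at hformula
  rw [← hσK] at hformula
  linear_combination -hformula - w x z * hdeg

lemma sum_mul_weight_mul_weight_eq_zero (hvB : ∀ x ∉ B, v x = 0)
    (hv : ∀ x, glap m w v x = -σ * v x) {x z : α} (hmx : m x ≠ 0) (hx : x ∉ B) (hz : z ∉ B)
    (hxz : x ≠ z) (h : cdDefect m w K n v (Pi.single z 1) x = 0) :
    ∑ y, v y * w x y * w y z / m y = 0 := by
  have := four_mul_cdDefect_single (K := K) (n := n) hv hmx hxz
  simp only [h, mul_zero, hvB x hx, hvB z hz] at this
  linarith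

lemma measure_eq_of_pair {p q : α} (hm : ∀ x, m x ≠ 0) (hsym : ∀ x y, w x y = w y x) {σ : ℝ} (hσ : σ ≠ 0)
    (hv : ∀ x, glap m w v x = -σ * v x) (hvB : ∀ x ∉ ({p, q} : Finset α), v x = 0) (hpq : p ≠ q)
    (hvp : v p ≠ 0) (hvq : v q = -v p) : m p = m q := by
  have hsum : ∑ x, v x * m x = 0 := by
    have h := sum_glap_mul_eq_zero hm hsym v
    simp only [hv, mul_assoc, ← mul_sum, mul_eq_zero, neg_eq_zero, hσ, false_or] at h
    exact h
  rw [Fintype.sum_eq_add p q hpq fun c hc => by rw [hvB c (by simp [hc.1, hc.2]), zero_mul],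
    hvq] at hsum
  have h' : v p * (m p - m q) = 0 := by linear_combination hsum
  linarith [(mul_eq_zero.mp h').resolve_left hvp]

end BoundaryIdentities

section Rigidity

variable {α : Type*} {m : α → ℝ} {w : α → α → ℝ}

lemma pos_of_wgraph_adj (hsym : ∀ x y, w x y = w y x) {x y : α} (h : (wgraph w).Adj x y) :
    0 < w x y := by
  rcases ((SimpleGraph.fromRel_adj _ _ _).mp h).2 with h | h
  · exact h
  · rwa [hsym]

variable [Fintype α]

lemma twoStepWeight_pos (hm : ∀ x, 0 < m x) (hnn : ∀ x y, 0 ≤ w x y) {x y z : α}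
    (hxy : 0 < w x y) (hyz : 0 < w y z) : 0 < twoStepWeight m w x z := by
  have hterm : 0 < w x y * w y z / m y := by have := hm y; positivity
  rw [twoStepWeight]
  refine hterm.trans_le
    (single_le_sum (f := fun t => w x t * w t z / m t) (fun t _ => ?_) (mem_univ y))
  have := hm t; have := hnn x t; have := hnn t z
  positivity

/-- The identities obtained by testing the vanishing `CD` defect of an eigenfunction `v`
supported on `B` against point masses (`four_mul_cdDefect_single`). -/
structure ExtremalIdentities (m : α → ℝ) (w : α → α → ℝ) (B : Finset α) (v : α → ℝ) (ρ : ℝ) :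
    Prop where
  interior : ∀ x ∉ B, ∑ y, v y * w x y = 0
  boundary_boundary : ∀ a ∈ B, ∀ b ∈ B, a ≠ b → (v a + v b) * twoStepWeight m w a b = 0
  boundary_interior : ∀ a ∈ B, ∀ z ∉ B,
    v a * (twoStepWeight m w a z - w a z * (wdeg m w z - ρ)) = 0
  interior_interior : ∀ x ∉ B, ∀ z ∉ B, x ≠ z → ∑ y, v y * w x y * w y z / m y = 0

lemma CD.extremalIdentities [DecidableEq α] {K n σ : ℝ} {B : Finset α} {v : α → ℝ}
    (hCD : CD m w K n) (hm : ∀ x, 0 < m x) (hsym : ∀ x y, w x y = w y x)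
    (hind : ∀ x ∈ B, ∀ y ∈ B, w x y = 0) (hσK : (1 - 1 / n) * σ = K) (hvB : ∀ x ∉ B, v x = 0)
    (hv : ∀ x, glap m w v x = -σ * v x) : ExtremalIdentities m w B v ((1 + 2 / n) * σ) where
  interior x hx := sum_mul_weight_eq_zero_of_not_mem hv hvB (hm x).ne' hx
  boundary_boundary a ha _ hb hab := add_mul_twoStepWeight_eq_zero hind hvB hv (hm a).ne' ha hb hab
    (hCD.cdDefect_eq_zero_of_eigen hm hsym hσK hv _ a)
  boundary_interior a ha _ hz := mul_twoStepWeight_sub_eq_zero hind hvB hv hσK (hm a).ne' ha hz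
    (hCD.cdDefect_eq_zero_of_eigen hm hsym hσK hv _ a)
  interior_interior x hx _ hz hxz := sum_mul_weight_mul_weight_eq_zero hvB hv (hm x).ne' hx hz hxz
    (hCD.cdDefect_eq_zero_of_eigen hm hsym hσK hv _ x)

namespace ExtremalIdentities

variable {B : Finset α} {v : α → ℝ} {ρ : ℝ}

lemma eq_neg_of_adj (hI : ExtremalIdentities m w B v ρ) (hm : ∀ x, 0 < m x)
    (hsym : ∀ x y, w x y = w y x) (hnn : ∀ x y, 0 ≤ w x y) {a c y : α} (ha : a ∈ B) (hc : c ∈ B)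
    (hac : a ≠ c) (hya : 0 < w y a) (hyc : 0 < w y c) : v c = -v a := by
  have hpos := twoStepWeight_pos hm hnn (by rwa [hsym] : 0 < w a y) hyc
  linarith [(mul_eq_zero.mp (hI.boundary_boundary a ha c hc hac)).resolve_right hpos.ne']

lemma eq_or_eq_of_adj (hI : ExtremalIdentities m w B v ρ) (hm : ∀ x, 0 < m x)
    (hsym : ∀ x y, w x y = w y x) (hnn : ∀ x y, 0 ≤ w x y) {p q y c : α} (hp : p ∈ B)
    (hq : q ∈ B) (hpq : p ≠ q) (hvp : v p ≠ 0) (hyp : 0 < w y p) (hyq : 0 < w y q) (hc : c ∈ B)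
    (hyc : 0 < w y c) : c = p ∨ c = q := by
  by_contra! h
  have hcp := hI.eq_neg_of_adj hm hsym hnn hp hc h.1.symm hyp hyc
  have hcq := hI.eq_neg_of_adj hm hsym hnn hq hc h.2.symm hyq hyc
  have hqp := hI.eq_neg_of_adj hm hsym hnn hp hq hpq hyp hyq
  exact hvp (by linarith)

lemma exists_adj_ne (hI : ExtremalIdentities m w B v ρ) (hnn : ∀ x y, 0 ≤ w x y)
    (hvB : ∀ x ∉ B, v x = 0) {p y : α} (hy : y ∉ B) (hvp : v p ≠ 0) (hyp : 0 < w y p) :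
    ∃ q ∈ B, q ≠ p ∧ 0 < w y q := by
  by_contra! h
  have hsum := hI.interior y hy
  rw [sum_eq_single_of_mem p (mem_univ p) fun c _ hcp => ?_] at hsum
  · exact mul_ne_zero hvp hyp.ne' hsum
  by_cases hc : c ∈ B
  · rw [le_antisymm (h c hc hcp) (hnn y c), mul_zero]
  · rw [hvB c hc, zero_mul]

lemma pos_of_pos_of_adj_pair (hI : ExtremalIdentities m w B v ρ) (hm : ∀ x, 0 < m x)
    (hsym : ∀ x y, w x y = w y x) (hnn : ∀ x y, 0 ≤ w x y) (hvB : ∀ x ∉ B, v x = 0)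
    {p q y z : α} (hp : p ∈ B) (hq : q ∈ B) (hpq : p ≠ q) (hvp : v p ≠ 0) (hvq : v q = -v p)
    (hy : y ∉ B) (hyp : 0 < w y p) (hyq : 0 < w y q) (hz : z ∉ B) (hpz : 0 < w p z) :
    0 < w q z := by
  by_cases hyz : y = z
  · rwa [← hyz, hsym]
  have hsum := hI.interior_interior y hy z hz hyz
  rw [Fintype.sum_eq_add p q hpq fun c hc => ?_, hvq] at hsum
  · have heq : w y p * w p z / m p = w y q * w q z / m q := by
      have h : v p * (w y p * w p z / m p - w y q * w q z / m q) = 0 := by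
        linear_combination hsum
      linarith [(mul_eq_zero.mp h).resolve_left hvp]
    by_contra! hqz
    rw [le_antisymm hqz (hnn q z), mul_zero, zero_div] at heq
    have := hm p
    have : 0 < w y p * w p z / m p := by positivity
    linarith
  by_cases hcB : c ∈ B
  · have hyc : w y c = 0 := le_antisymm (not_lt.mp fun hyc =>
      (hI.eq_or_eq_of_adj hm hsym hnn hp hq hpq hvp hyp hyq hcB hyc).elim hc.1 hc.2) (hnn y c)
    simp [hyc]
  · simp [hvB c hcB]

lemma pos_of_adj_of_adj (hI : ExtremalIdentities m w B v ρ) (hm : ∀ x, 0 < m x)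
    (hnn : ∀ x y, 0 ≤ w x y) {a x z : α} (ha : a ∈ B) (hva : v a ≠ 0) (hz : z ∉ B)
    (hax : 0 < w a x) (hxz : 0 < w x z) : 0 < w a z := by
  have h := (mul_eq_zero.mp (hI.boundary_interior a ha z hz)).resolve_left hva
  have hpos := twoStepWeight_pos hm hnn hax hxz
  by_contra! h0
  rw [le_antisymm h0 (hnn a z), zero_mul, sub_zero] at h
  exact hpos.ne' h

lemma forall_eq_or_eq_or_adj (hI : ExtremalIdentities m w B v ρ) (hconn : (wgraph w).Connected)
    (hm : ∀ x, 0 < m x) (hsym : ∀ x y, w x y = w y x) (hnn : ∀ x y, 0 ≤ w x y)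
    (hind : ∀ x ∈ B, ∀ y ∈ B, w x y = 0) {p q : α} (hp : p ∈ B) (hq : q ∈ B) (hpq : p ≠ q)
    (hvp : v p ≠ 0) (hiff : ∀ z ∉ B, 0 < w p z ↔ 0 < w q z) (x : α) :
    x = p ∨ x = q ∨ (x ∉ B ∧ 0 < w p x) := by
  refine hconn.mem_of_adj_closed (S := {x | x = p ∨ x = q ∨ (x ∉ B ∧ 0 < w p x)}) ?_
    (Or.inl rfl) x
  intro x y hadj hx
  have hxy := pos_of_wgraph_adj hsym hadj
  have hyB : x ∈ B → y ∉ B := fun hx hy => hxy.ne' (hind x hx y hy)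
  rcases hx with rfl | rfl | ⟨hx, hpx⟩
  · exact Or.inr (Or.inr ⟨hyB hp, hxy⟩)
  · exact Or.inr (Or.inr ⟨hyB hq, (hiff y (hyB hq)).mpr hxy⟩)
  · by_cases hy : y ∈ B
    · have hxp : 0 < w x p := by rwa [hsym]
      have hxq : 0 < w x q := by rw [hsym]; exact (hiff x hx).mp hpx
      exact (hI.eq_or_eq_of_adj hm hsym hnn hp hq hpq hvp hxp hxq hy hxy).imp_right Or.inl
    · exact Or.inr (Or.inr ⟨hy, hI.pos_of_adj_of_adj hm hnn hp hvp hy hpx hxy⟩)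

variable [DecidableEq α]

lemma exists_eq_pair (hI : ExtremalIdentities m w B v ρ) (hconn : (wgraph w).Connected)
    (hm : ∀ x, 0 < m x) (hsym : ∀ x y, w x y = w y x) (hnn : ∀ x y, 0 ≤ w x y)
    (hind : ∀ x ∈ B, ∀ y ∈ B, w x y = 0) (hvB : ∀ x ∉ B, v x = 0) {p y₀ : α} (hp : p ∈ B)
    (hvp : v p ≠ 0) (hy₀ : y₀ ∉ B) (hpy₀ : 0 < w p y₀) :
    ∃ q, q ≠ p ∧ v q = -v p ∧ B = {p, q} ∧ ∀ x ∉ B, 0 < w p x ∧ 0 < w q x := by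
  have hy₀p : 0 < w y₀ p := by rwa [hsym]
  obtain ⟨q, hq, hqp, hy₀q⟩ := hI.exists_adj_ne hnn hvB hy₀ hvp hy₀p
  have hvq := hI.eq_neg_of_adj hm hsym hnn hp hq hqp.symm hy₀p hy₀q
  have hvq0 : v q ≠ 0 := by rw [hvq]; exact neg_ne_zero.mpr hvp
  have hiff : ∀ z ∉ B, 0 < w p z ↔ 0 < w q z := fun z hz =>
    ⟨hI.pos_of_pos_of_adj_pair hm hsym hnn hvB hp hq hqp.symm hvp hvq hy₀ hy₀p hy₀q hz,
      hI.pos_of_pos_of_adj_pair hm hsym hnn hvB hq hp hqp hvq0 (by rw [hvq, neg_neg]) hy₀ hy₀q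
        hy₀p hz⟩
  have hall := hI.forall_eq_or_eq_or_adj hconn hm hsym hnn hind hp hq hqp.symm hvp hiff
  refine ⟨q, hqp, hvq, ?_, fun x hx => ?_⟩
  · ext x
    simp only [mem_insert, mem_singleton]
    constructor
    · intro hx
      rcases hall x with h | h | ⟨h, _⟩
      exacts [Or.inl h, Or.inr h, absurd hx h]
    · rintro (rfl | rfl)
      exacts [hp, hq]
  · rcases hall x with rfl | rfl | ⟨-, hpx⟩
    exacts [absurd hp hx, absurd hq hx, ⟨hpx, (hiff x hx).mp hpx⟩]

variable {p q : α}

lemma weight_eq_of_pair (hI : ExtremalIdentities m w {p, q} v ρ)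
    (hsym : ∀ x y, w x y = w y x) (hvB : ∀ x ∉ ({p, q} : Finset α), v x = 0) (hpq : p ≠ q)
    (hvp : v p ≠ 0) (hvq : v q = -v p) {x : α} (hx : x ∉ ({p, q} : Finset α)) :
    w p x = w q x := by
  have h := hI.interior x hx
  rw [Fintype.sum_eq_add p q hpq fun c hc => by rw [hvB c (by simp [hc.1, hc.2]), zero_mul],
    hvq] at h
  have h' : v p * (w x p - w x q) = 0 := by linear_combination h
  rw [hsym p, hsym q]
  linarith [(mul_eq_zero.mp h').resolve_left hvp]

lemma boundary_wdeg_of_pair (hI : ExtremalIdentities m w {p, q} v ρ)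
    (hm : ∀ x, 0 < m x) (hsym : ∀ x y, w x y = w y x) (hnn : ∀ x y, 0 ≤ w x y)
    (hind : ∀ x ∈ ({p, q} : Finset α), ∀ y ∈ ({p, q} : Finset α), w x y = 0) (hpq : p ≠ q)
    (hvp : v p ≠ 0) (hpos : ∀ x ∉ ({p, q} : Finset α), 0 < w p x)
    (hweq : ∀ x ∉ ({p, q} : Finset α), w p x = w q x) {x : α} (hx : x ∉ ({p, q} : Finset α)) :
    1 / m x * ∑ y ∈ {p, q}, w x y = ρ := by
  have hp : p ∈ ({p, q} : Finset α) := mem_insert_self p {q}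
  have hq : q ∈ ({p, q} : Finset α) := by simp
  have hcompl : ∀ g : α → ℝ, ∑ t ∈ ({p, q} : Finset α)ᶜ, g t = ∑ t, g t - (g p + g q) := by
    intro g
    rw [← sum_compl_add_sum {p, q} g, sum_pair hpq]
    ring
  -- the boundary-interior identity for `p`, in the form required by the maximum principle
  have hmax : ∀ z ∈ ({p, q} : Finset α)ᶜ, ∑ t ∈ ({p, q} : Finset α)ᶜ,
      (w p t / m t - w p z / m z) * w z t = 2 * w p z * (w p z / m z - ρ / 2) := by
    intro z hz
    rw [mem_compl] at hz
    have h4 := (mul_eq_zero.mp (hI.boundary_interior p hp z hz)).resolve_left hvp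
    have hsum : ∑ t, (w p t / m t - w p z / m z) * w z t
        = twoStepWeight m w p z - w p z / m z * ∑ t, w z t := by
      rw [twoStepWeight, mul_sum, ← sum_sub_distrib]
      exact sum_congr rfl fun t _ => by rw [hsym z t]; ring
    rw [hcompl, hsum, hind p hp p hp, hind p hp q hq, hsym z p, hsym z q, ← hweq z hz]
    rw [wdeg] at h4
    have := (hm z).ne'
    field_simp at h4 ⊢
    linear_combination h4
  have hfx := eq_of_forall_sum_sub_mul_eq hnn (fun z hz => by
    have := hpos z (mem_compl.mp hz); positivity) hmax (mem_compl.mpr hx)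
  rw [sum_pair hpq, hsym x p, hsym x q, ← hweq x hx]
  have := (hm x).ne'
  field_simp at hfx ⊢
  linarith

end ExtremalIdentities

end Rigidity

theorem stmt8_general (m : V → ℝ) (w : V → V → ℝ) (B : Finset V) (hW : WeightedGraph m w)
    (hconn : (wgraph w).Connected) (hB : GraphBoundary w B)
    (K n : ℝ) (hK : 0 < K) (hn : 1 < n) (hCD : CD m w K n)
    (hs1 : SteklovEig m w B (n * K / (n - 1))) :
    B.card = 2 ∧
    ∃ p q : V, p ≠ q ∧ B = {p, q} ∧
      (∀ x, x ∉ B → 0 < w p x ∧ 0 < w q x) ∧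
      m p = m q ∧
      (∀ x, x ∉ B → w p x = w q x) ∧
      (1 / m p) * ∑ y, w p y = n * K / (n - 1) ∧
      (1 / m q) * ∑ y, w q y = n * K / (n - 1) ∧
      (∀ x, x ∉ B → (1 / m x) * ∑ y ∈ B, w x y = (n + 2) * K / (n - 1)) := by
  obtain ⟨hm, hsym, hnn, -⟩ := hW
  obtain ⟨-, hind, hbnd⟩ := hB
  set σ := n * K / (n - 1) with hσ
  have hn0 : n - 1 ≠ 0 := by linarith
  have hσK : (1 - 1 / n) * σ = K := by rw [hσ]; field_simp
  have hρ : (n + 2) * K / (n - 1) = (1 + 2 / n) * σ := by rw [hσ]; field_simp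
  obtain ⟨v, ⟨p, hp, hvp⟩, hvB, hv⟩ := hCD.exists_eigen_of_steklovEig hm hsym hK.ne' hσK hs1
  have hI := hCD.extremalIdentities hm hsym hind hσK hvB hv
  obtain ⟨y₀, hy₀, hpy₀⟩ := hbnd p hp
  obtain ⟨q, hqp, hvq, rfl, hpos⟩ := hI.exists_eq_pair hconn hm hsym hnn hind hvB hp hvp hy₀ hpy₀
  have hvq0 : v q ≠ 0 := by rw [hvq]; exact neg_ne_zero.mpr hvp
  have hweq := fun x (hx : x ∉ ({p, q} : Finset V)) =>
    hI.weight_eq_of_pair hsym hvB hqp.symm hvp hvq hx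
  refine ⟨card_pair hqp.symm, p, q, hqp.symm, rfl, hpos,
    measure_eq_of_pair (fun x => (hm x).ne') hsym (by positivity) hv hvB hqp.symm hvp hvq, hweq,
    wdeg_eq_of_mem hind hvB hv (by simp) hvp, wdeg_eq_of_mem hind hvB hv (by simp) hvq0,
    fun x hx => ?_⟩
  rw [hρ]
  exact hI.boundary_wdeg_of_pair hm hsym hnn hind hqp.symm hvp (fun x hx => (hpos x hx).1) hweq hx

/-- rigidity structure: if `σ₂ = nK/(n-1)` then `|B| = 2`, every
interior vertex is adjacent to both boundary vertices, the boundary vertices have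
equal measure and equal weights to each interior vertex, weighted degree
`nK/(n-1)` at the boundary, and weighted boundary degree `(n+2)K/(n-1)` inside. -/
theorem stmt8 (m : V → ℝ) (w : V → V → ℝ) (B : Finset V) (hW : WeightedGraph m w)
    (hconn : (wgraph w).Connected) (hB : GraphBoundary w B)
    (K n : ℝ) (hK : 0 < K) (hn : 1 < n) (hCD : CD m w K n)
    (hs1 : SteklovEig m w B (n * K / (n - 1)))
    (hs2 : ∀ σ : ℝ, SteklovEig m w B σ → 0 < σ → n * K / (n - 1) ≤ σ) :
    B.card = 2 ∧
    ∃ p q : V, p ≠ q ∧ B = {p, q} ∧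
      (∀ x, x ∉ B → 0 < w p x ∧ 0 < w q x) ∧
      m p = m q ∧
      (∀ x, x ∉ B → w p x = w q x) ∧
      (1 / m p) * ∑ y, w p y = n * K / (n - 1) ∧
      (1 / m q) * ∑ y, w q y = n * K / (n - 1) ∧
      (∀ x, x ∉ B → (1 / m x) * ∑ y ∈ B, w x y = (n + 2) * K / (n - 1)) :=
  stmt8_general m w B hW hconn hB K n hK hn hCD hs1
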